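/- Define operators on S(ℝ × ℤ/c) (c ≠ 0, θ irrational, ad−bc = 1) by (fU₁)(t,α) = e^{2πi(t − αd/c)}·f(t,α), (fU₂)(t,α) = f(t − (cθ+d)/c, α−1), (V₁f)(t,α) = e^{2πi(t/(cθ+d) − α/c)}·f(t,α), (V₂f)(t,α) = f(t − 1/c, α−a). Then U₂U₁ = e^{2πiθ}U₁U₂ (as right actions), V₂V₁ = e^{2πiθ'}V₁V₂ with θ' = (aθ+b)/(cθ+d), and every V_i commutes with every U_j (the left A_{θ'}-action commutes with the right A_θ-action). -/

import Mathlib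

open Complex

/-- Right action of the generator `U₁`: `(fU₁)(t,α) = e^{2πi(t − αd/c)}·f(t,α)`. -/
noncomputable def heisU1 (c d : ℤ) (f : ℝ × ZMod c.natAbs → ℂ) : ℝ × ZMod c.natAbs → ℂ :=
  fun p => Complex.exp (2 * Real.pi * Complex.I *
      ((p.1 - ((p.2.val : ℝ) * (d : ℝ)) / (c : ℝ) : ℝ) : ℂ)) * f p

/-- Right action of the generator `U₂`: `(fU₂)(t,α) = f(t − (cθ+d)/c, α−1)`. -/
noncomputable def heisU2 (c d : ℤ) (θ : ℝ) (f : ℝ × ZMod c.natAbs → ℂ) :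
    ℝ × ZMod c.natAbs → ℂ :=
  fun p => f (p.1 - ((c : ℝ) * θ + (d : ℝ)) / (c : ℝ), p.2 - 1)

/-- Left action of the generator `V₁`: `(V₁f)(t,α) = e^{2πi(t/(cθ+d) − α/c)}·f(t,α)`. -/
noncomputable def heisV1 (c d : ℤ) (θ : ℝ) (f : ℝ × ZMod c.natAbs → ℂ) :
    ℝ × ZMod c.natAbs → ℂ :=
  fun p => Complex.exp (2 * Real.pi * Complex.I *
      ((p.1 / ((c : ℝ) * θ + (d : ℝ)) - (p.2.val : ℝ) / (c : ℝ) : ℝ) : ℂ)) * f p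

/-- Left action of the generator `V₂`: `(V₂f)(t,α) = f(t − 1/c, α−a)`. -/
noncomputable def heisV2 (a c : ℤ) (f : ℝ × ZMod c.natAbs → ℂ) : ℝ × ZMod c.natAbs → ℂ :=
  fun p => f (p.1 - 1 / (c : ℝ), p.2 - (a : ZMod c.natAbs))

/-! All six relations compare two functions that differ by a translation and a phase
`e^{2πi x}`, so each reduces to an identity of phases modulo `ℤ`. The residue `α ∈ ℤ/c` enters
the phases only through `α.val / c`, and `(α - z).val ≡ α.val - z (mod c)` makes this well
defined mod `ℤ`. For `V₂V₁` the phase is `a/c - 1/(c(cθ+d))`, which equals `(aθ+b)/(cθ+d)`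
exactly because `ad - bc = 1`; the same identity makes `V₂` commute with `U₁`. -/

open Real

theorem exp_two_pi_I_mul_eq_of_sub_eq_intCast {x y : ℝ} (m : ℤ) (h : x - y = m) :
    exp (2 * π * I * x) = exp (2 * π * I * y) :=
  exp_eq_exp_iff_exists_int.mpr
    ⟨m, by rw [← sub_eq_iff_eq_add', ← mul_sub, ← ofReal_sub, h]; push_cast; ring⟩

theorem exp_two_pi_I_mul_eq_mul_of_sub_eq_intCast {x y z : ℝ} (m : ℤ) (h : x - (y + z) = m) :
    exp (2 * π * I * x) = exp (2 * π * I * y) * exp (2 * π * I * z) := by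
  rw [← Complex.exp_add, ← mul_add, ← ofReal_add, exp_two_pi_I_mul_eq_of_sub_eq_intCast m h]

theorem ZMod.exists_val_sub_intCast_eq {c : ℤ} (hc : c ≠ 0) (x : ZMod c.natAbs) (z : ℤ) :
    ∃ k : ℤ, ((x - z).val : ℝ) = x.val - z + k * c := by
  have : NeZero c.natAbs := ⟨Int.natAbs_ne_zero.mpr hc⟩
  have hmod : ((x.val : ℤ) - z) ≡ (x - z).val [ZMOD c.natAbs] := by
    rw [← ZMod.intCast_eq_intCast_iff]; push_cast; simp
  obtain ⟨k, hk⟩ := Int.natAbs_dvd.mp hmod.dvd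
  exact ⟨k, by rw [← sub_eq_iff_eq_add', mul_comm]; exact_mod_cast hk⟩

theorem Irrational.intCast_mul_add_intCast_ne_zero {θ : ℝ} (hθ : Irrational θ) {c : ℤ}
    (hc : c ≠ 0) (d : ℤ) : (c : ℝ) * θ + d ≠ 0 :=
  ((hθ.intCast_mul hc).add_intCast d).ne_zero

section
variable {a b c d : ℤ} {θ : ℝ}

theorem heisU1_heisU2_eq_exp_mul (hc : c ≠ 0) (f : ℝ × ZMod c.natAbs → ℂ) :
    heisU1 c d (heisU2 c d θ f)
      = fun p => exp (2 * π * I * θ) * heisU2 c d θ (heisU1 c d f) p := by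
  funext ⟨t, α⟩
  obtain ⟨k, hk⟩ := ZMod.exists_val_sub_intCast_eq hc α 1
  have hc' : (c : ℝ) ≠ 0 := Int.cast_ne_zero.mpr hc
  simp only [heisU1, heisU2]
  rw [← mul_assoc, ← exp_two_pi_I_mul_eq_mul_of_sub_eq_intCast (d * k)]
  push_cast at hk ⊢
  rw [hk]; field_simp; ring

theorem heisV2_heisV1_eq_exp_mul (hc : c ≠ 0) (hdet : a * d - b * c = 1)
    (hcd : (c : ℝ) * θ + d ≠ 0) (f : ℝ × ZMod c.natAbs → ℂ) :
    heisV2 a c (heisV1 c d θ f)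
      = fun p => exp (2 * π * I * (((a * θ + b) / (c * θ + d) : ℝ) : ℂ)) *
          heisV1 c d θ (heisV2 a c f) p := by
  funext ⟨t, α⟩
  obtain ⟨k, hk⟩ := ZMod.exists_val_sub_intCast_eq hc α a
  have hc' : (c : ℝ) ≠ 0 := Int.cast_ne_zero.mpr hc
  have hdetR : (a : ℝ) * d - b * c = 1 := by exact_mod_cast hdet
  simp only [heisV1, heisV2]
  rw [← mul_assoc, ← exp_two_pi_I_mul_eq_mul_of_sub_eq_intCast (-k)]
  rw [hk]; field_simp; push_cast; linear_combination hdetR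

theorem heisV1_heisU1_comm (f : ℝ × ZMod c.natAbs → ℂ) :
    heisV1 c d θ (heisU1 c d f) = heisU1 c d (heisV1 c d θ f) := by
  funext p
  exact mul_left_comm _ _ _

theorem heisV1_heisU2_comm (hc : c ≠ 0) (hcd : (c : ℝ) * θ + d ≠ 0) (f : ℝ × ZMod c.natAbs → ℂ) :
    heisV1 c d θ (heisU2 c d θ f) = heisU2 c d θ (heisV1 c d θ f) := by
  funext ⟨t, α⟩
  obtain ⟨k, hk⟩ := ZMod.exists_val_sub_intCast_eq hc α 1
  have hc' : (c : ℝ) ≠ 0 := Int.cast_ne_zero.mpr hc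
  simp only [heisV1, heisU2]
  rw [exp_two_pi_I_mul_eq_of_sub_eq_intCast k]
  push_cast at hk ⊢
  rw [hk]; field_simp; ring

theorem heisV2_heisU1_comm (hc : c ≠ 0) (hdet : a * d - b * c = 1) (f : ℝ × ZMod c.natAbs → ℂ) :
    heisV2 a c (heisU1 c d f) = heisU1 c d (heisV2 a c f) := by
  funext ⟨t, α⟩
  obtain ⟨k, hk⟩ := ZMod.exists_val_sub_intCast_eq hc α a
  have hc' : (c : ℝ) ≠ 0 := Int.cast_ne_zero.mpr hc
  have hdetR : (a : ℝ) * d - b * c = 1 := by exact_mod_cast hdet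
  simp only [heisU1, heisV2]
  rw [exp_two_pi_I_mul_eq_of_sub_eq_intCast (b - d * k)]
  rw [hk]; field_simp; push_cast; linear_combination hdetR

theorem heisV2_heisU2_comm (f : ℝ × ZMod c.natAbs → ℂ) :
    heisV2 a c (heisU2 c d θ f) = heisU2 c d θ (heisV2 a c f) := by
  funext ⟨t, α⟩
  simp only [heisU2, heisV2, sub_right_comm]

end

/-- On the Heisenberg bimodule `S(ℝ × ℤ/c)`: the right actions satisfy
`U₂U₁ = e^{2πiθ}U₁U₂`, the left actions satisfy `V₂V₁ = e^{2πiθ'}V₁V₂` with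
`θ' = (aθ+b)/(cθ+d)`, and each `V_i` commutes with each `U_j`. -/
theorem heisenberg_bimodule_relations (a b c d : ℤ) (hc : c ≠ 0)
    (hdet : a * d - b * c = 1) (θ : ℝ) (hθ : Irrational θ) :
    (∀ f : ℝ × ZMod c.natAbs → ℂ,
        heisU1 c d (heisU2 c d θ f)
          = fun p => Complex.exp (2 * Real.pi * Complex.I * (θ : ℂ)) *
              heisU2 c d θ (heisU1 c d f) p)
    ∧ (∀ f : ℝ × ZMod c.natAbs → ℂ,
        heisV2 a c (heisV1 c d θ f)
          = fun p => Complex.exp (2 * Real.pi * Complex.I *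
                ((((a : ℝ) * θ + (b : ℝ)) / ((c : ℝ) * θ + (d : ℝ)) : ℝ) : ℂ)) *
              heisV1 c d θ (heisV2 a c f) p)
    ∧ (∀ f : ℝ × ZMod c.natAbs → ℂ, heisV1 c d θ (heisU1 c d f) = heisU1 c d (heisV1 c d θ f))
    ∧ (∀ f : ℝ × ZMod c.natAbs → ℂ, heisV1 c d θ (heisU2 c d θ f) = heisU2 c d θ (heisV1 c d θ f))
    ∧ (∀ f : ℝ × ZMod c.natAbs → ℂ, heisV2 a c (heisU1 c d f) = heisU1 c d (heisV2 a c f))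
    ∧ (∀ f : ℝ × ZMod c.natAbs → ℂ, heisV2 a c (heisU2 c d θ f) = heisU2 c d θ (heisV2 a c f)) := by
  have hcd := hθ.intCast_mul_add_intCast_ne_zero hc d
  exact ⟨heisU1_heisU2_eq_exp_mul hc, heisV2_heisV1_eq_exp_mul hc hdet hcd, heisV1_heisU1_comm,
    heisV1_heisU2_comm hc hcd, heisV2_heisU1_comm hc hdet, heisV2_heisU2_comm⟩
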